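/- Let α > 0, ε > 0, C_max > 0, R_max ≥ 0, γ ∈ (0,1), and let A_R, A_C, A_aug, λ be real numbers satisfying A_aug = A_R − λ·A_C, λ ≥ α·(1−γ)/(C_max + ε·(1−γ)), |A_R| ≤ R_max/(1−γ), and |A_aug| ≤ |A_R| + α. Then |A_C| ≤ 2·R_max·(C_max + ε·(1−γ))/(α·(1−γ)²) + C_max/(1−γ) + ε. -/
import Mathlib


/-- Bound on the cost advantage in the CPO analysis: from `A_aug = A_R − λ·A_C`,
`λ ≥ α(1−γ)/(C_max + ε(1−γ))`, `|A_R| ≤ R_max/(1−γ)`, and `|A_aug| ≤ |A_R| + α`,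
it follows that `|A_C| ≤ 2R_max(C_max + ε(1−γ))/(α(1−γ)²) + C_max/(1−γ) + ε`. -/
theorem stmt_11 (α ε Cmax Rmax γ AR AC Aaug lam : ℝ)
    (hα : 0 < α) (hε : 0 < ε) (hC : 0 < Cmax) (hR : 0 ≤ Rmax)
    (hγ0 : 0 < γ) (hγ1 : γ < 1)
    (hAaug : Aaug = AR - lam * AC)
    (hlam : lam ≥ α * (1 - γ) / (Cmax + ε * (1 - γ)))
    (hAR : |AR| ≤ Rmax / (1 - γ))
    (hAaugBound : |Aaug| ≤ |AR| + α) :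
    |AC| ≤ 2 * Rmax * (Cmax + ε * (1 - γ)) / (α * (1 - γ) ^ 2) + Cmax / (1 - γ) + ε := by
  have h1 : (0:ℝ) < 1 - γ := by linarith
  have hden : (0:ℝ) < Cmax + ε * (1 - γ) := by positivity
  set L : ℝ := α * (1 - γ) / (Cmax + ε * (1 - γ)) with hLdef
  have hL : 0 < L := by positivity
  have hlamAC : lam * |AC| ≤ 2 * Rmax / (1 - γ) + α := by
    have h2 : |lam * AC| = |AR - Aaug| := by rw [hAaug]; ring_nf
    have h3 : |AR - Aaug| ≤ |AR| + |Aaug| := abs_sub _ _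
    have h4 : lam * |AC| = |lam * AC| := by
      rw [abs_mul, abs_of_nonneg (le_of_lt (lt_of_lt_of_le hL hlam))]
    have h5 : Rmax / (1 - γ) = Rmax * (1 - γ)⁻¹ := by ring
    rw [h4, h2]
    calc |AR - Aaug| ≤ |AR| + |Aaug| := h3
      _ ≤ |AR| + (|AR| + α) := by linarith
      _ ≤ 2 * Rmax / (1 - γ) + α := by
          have := hAR; rw [div_eq_mul_inv] at *; linarith
  have hLAC : L * |AC| ≤ 2 * Rmax / (1 - γ) + α := by
    have : L * |AC| ≤ lam * |AC| := mul_le_mul_of_nonneg_right hlam (abs_nonneg _)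
    linarith
  have hkey : |AC| ≤ (2 * Rmax / (1 - γ) + α) / L := by
    rw [le_div_iff₀ hL]
    linarith [hLAC]
  have heq : (2 * Rmax / (1 - γ) + α) / L
      = 2 * Rmax * (Cmax + ε * (1 - γ)) / (α * (1 - γ) ^ 2) + Cmax / (1 - γ) + ε := by
    rw [hLdef]
    field_simp
    ring
  linarith [hkey, heq ▸ hkey]
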